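/- arXiv:0912.3726 — 8 statements merged into one kernel-verified Lean document; each statement's English description precedes it below -/
import Mathlib

section
/- Let R be a Kähler curvature tensor on (V,J,⟨,⟩), and define H(u) = R(u,J(u),u,J(u)). Then for any unit vectors u, v and real numbers a, b with a² + b² = 1, one has H(au+bv) + H(au-bv) = 2a⁴H(u) + 2b⁴H(v) + 12a²b²R(u,J(u),v,J(v)) - 8a²b²R(u,v,u,v). -/
open RealInnerProductSpace

variable {V : Type*} [NormedAddCommGroup V] [InnerProductSpace ℝ V]

/-- A (Riemann) curvature tensor: a 4-linear map with the usual symmetries. -/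
structure IsCurvatureTensor (R : V → V → V → V → ℝ) : Prop where
  add1 : ∀ x x' y z w, R (x + x') y z w = R x y z w + R x' y z w
  smul1 : ∀ (c : ℝ) x y z w, R (c • x) y z w = c * R x y z w
  add2 : ∀ x y y' z w, R x (y + y') z w = R x y z w + R x y' z w
  smul2 : ∀ (c : ℝ) x y z w, R x (c • y) z w = c * R x y z w
  add3 : ∀ x y z z' w, R x y (z + z') w = R x y z w + R x y z' w
  smul3 : ∀ (c : ℝ) x y z w, R x y (c • z) w = c * R x y z w
  add4 : ∀ x y z w w', R x y z (w + w') = R x y z w + R x y z w'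
  smul4 : ∀ (c : ℝ) x y z w, R x y z (c • w) = c * R x y z w
  antisym1 : ∀ x y z w, R x y z w = -R y x z w
  antisym2 : ∀ x y z w, R x y z w = -R x y w z
  pairsym : ∀ x y z w, R z w x y = R x y z w
  bianchi : ∀ x y z w, R x y z w + R x w y z + R x z w y = 0

/-- A Kähler curvature tensor with respect to an almost complex structure `J`. -/
structure IsKahlerCurvatureTensor (J : V →ₗ[ℝ] V) (R : V → V → V → V → ℝ) : Prop where
  toCurv : IsCurvatureTensor R
  Jinv1 : ∀ x y z w, R (J x) (J y) z w = R x y z w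
  Jinv2 : ∀ x y z w, R x y (J z) (J w) = R x y z w

/-- The curvature tensor of complex hyperbolic space. -/
noncomputable def R0 (J : V →ₗ[ℝ] V) (u v z w : V) : ℝ :=
  -(1/4) * (⟪u, z⟫ * ⟪v, w⟫ - ⟪u, w⟫ * ⟪v, z⟫ + ⟪u, J z⟫ * ⟪v, J w⟫
    - ⟪u, J w⟫ * ⟪v, J z⟫ + 2 * ⟪u, J v⟫ * ⟪z, J w⟫)

/-- The holomorphic sectional curvature quantity `H(u) = R(u, Ju, u, Ju)`. -/
def Hol (J : V →ₗ[ℝ] V) (R : V → V → V → V → ℝ) (u : V) : ℝ := R u (J u) u (J u)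

/-- The norm on `⊗⁴ V*` induced by an orthonormal basis of `V`. -/
noncomputable def tensorNorm {ι : Type*} [Fintype ι] (b : OrthonormalBasis ι ℝ V)
    (T : V → V → V → V → ℝ) : ℝ :=
  Real.sqrt (∑ p : ι × ι × ι × ι, (T (b p.1) (b p.2.1) (b p.2.2.1) (b p.2.2.2)) ^ 2)

theorem statement4 (J : V →ₗ[ℝ] V) (hJ2 : ∀ v, J (J v) = -v)
    (hJi : ∀ v w : V, ⟪J v, J w⟫ = ⟪v, w⟫)
    (R : V → V → V → V → ℝ) (hR : IsKahlerCurvatureTensor J R)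
    (u v : V) (hu : ‖u‖ = 1) (hv : ‖v‖ = 1)
    (a b : ℝ) (hab : a ^ 2 + b ^ 2 = 1) :
    Hol J R (a • u + b • v) + Hol J R (a • u - b • v)
      = 2 * a ^ 4 * Hol J R u + 2 * b ^ 4 * Hol J R v
        + 12 * a ^ 2 * b ^ 2 * R u (J u) v (J v)
        - 8 * a ^ 2 * b ^ 2 * R u v u v := by
  obtain ⟨C, J1, J2⟩ := hR
  have neg2 : ∀ x y z w, R x (-y) z w = -R x y z w := by
    intro x y z w; rw [← neg_one_smul ℝ y, C.smul2]; ring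
  have neg3 : ∀ x y z w, R x y (-z) w = -R x y z w := by
    intro x y z w; rw [← neg_one_smul ℝ z, C.smul3]; ring
  have neg4 : ∀ x y z w, R x y z (-w) = -R x y z w := by
    intro x y z w; rw [← neg_one_smul ℝ w, C.smul4]; ring
  have h4 : R v (J v) u (J u) = R u (J u) v (J v) := C.pairsym _ _ _ _
  have h8 : R v (J u) u (J v) = R u (J v) v (J u) := C.pairsym _ _ _ _
  have h6 : R v (J u) v (J u) = R u (J v) u (J v) := by
    have e1 : R (J v) (J (J u)) v (J u) = R v (J u) v (J u) := J1 _ _ _ _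
    rw [hJ2, neg2] at e1
    have e2 : R (J v) u (J v) (J (J u)) = R (J v) u v (J u) := J2 _ _ _ _
    rw [hJ2, neg4] at e2
    have e3 : R (J v) u (J v) u = R u (J v) u (J v) := by
      rw [C.antisym1 (J v) u (J v) u, C.antisym2 u (J v) (J v) u]; ring
    linarith [e1, e2, e3]
  have hQ : R u (J v) u (J v) = R u (J u) v (J v) - R u v u v := by
    have bi := C.bianchi u (J u) v (J v)
    have e1 : R u (J v) (J (J u)) (J v) = R u (J v) (J u) v := J2 _ _ _ _
    rw [hJ2, neg3] at e1
    have e2' : R u v (J u) (J v) = R u v u v := J2 _ _ _ _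
    have e2'' : R u v (J v) (J u) = -R u v u v := by
      rw [C.antisym2 u v (J v) (J u), e2']
    linarith [bi, e1, e2'']
  have hT : R u (J v) v (J u) = R u (J u) v (J v) - R u v u v := by
    have bi := C.bianchi u (J v) v (J u)
    have e1 : R u (J u) (J v) v = -R u (J u) v (J v) := C.antisym2 _ _ _ _
    have e2 : R u v (J u) (J v) = R u v u v := J2 _ _ _ _
    linarith [bi, e1, e2]
  have hsub : a • u - b • v = a • u + (-b) • v := by
    rw [neg_smul, sub_eq_add_neg]
  rw [hsub]
  simp only [Hol, map_add, map_smul, C.add1, C.add2, C.add3, C.add4,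
    C.smul1, C.smul2, C.smul3, C.smul4]
  rw [h4, h6, h8, hQ, hT]
  ring
end

section
/- Let R be a Kähler curvature tensor, H(u) = R(u,J(u),u,J(u)). For any unit vectors u, v and reals a, b with a² + b² = 1, one has H(au+bJ(v)) + H(au-bJ(v)) = 2a⁴H(u) + 2b⁴H(v) + 12a²b²R(u,J(u),v,J(v)) - 8a²b²R(u,J(v),u,J(v)). -/
open RealInnerProductSpace

variable {V : Type*} [NormedAddCommGroup V] [InnerProductSpace ℝ V]

theorem statement5 (J : V →ₗ[ℝ] V) (hJ2 : ∀ v, J (J v) = -v)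
    (hJi : ∀ v w : V, ⟪J v, J w⟫ = ⟪v, w⟫)
    (R : V → V → V → V → ℝ) (hR : IsKahlerCurvatureTensor J R)
    (u v : V) (hu : ‖u‖ = 1) (hv : ‖v‖ = 1)
    (a b : ℝ) (hab : a ^ 2 + b ^ 2 = 1) :
    Hol J R (a • u + b • J v) + Hol J R (a • u - b • J v)
      = 2 * a ^ 4 * Hol J R u + 2 * b ^ 4 * Hol J R v
        + 12 * a ^ 2 * b ^ 2 * R u (J u) v (J v)
        - 8 * a ^ 2 * b ^ 2 * R u (J v) u (J v) := by
  obtain ⟨hT, hJ1, hJ2'⟩ := hR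
  obtain ⟨add1, smul1, add2, smul2, add3, smul3, add4, smul4, as1, as2, ps, bi⟩ := hT
  have n1 : ∀ x y z w : V, R (-x) y z w = - R x y z w := by
    intro x y z w; rw [← neg_one_smul ℝ x, smul1]; ring
  have n2 : ∀ x y z w : V, R x (-y) z w = - R x y z w := by
    intro x y z w; rw [← neg_one_smul ℝ y, smul2]; ring
  have n3 : ∀ x y z w : V, R x y (-z) w = - R x y z w := by
    intro x y z w; rw [← neg_one_smul ℝ z, smul3]; ring
  have n4 : ∀ x y z w : V, R x y z (-w) = - R x y z w := by
    intro x y z w; rw [← neg_one_smul ℝ w, smul4]; ring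
  have e2 : R u (J u) (J v) v = - R u (J u) v (J v) := as2 u (J u) (J v) v
  have e1 : R (J v) v u (J u) = - R u (J u) v (J v) := by
    rw [ps u (J u) (J v) v]; exact e2
  have e3 : R (J v) (J u) (J v) (J u) = R u v u v := by
    rw [hJ1 v u (J v) (J u), hJ2' v u v u, as1 v u v u, as2 u v v u, neg_neg]
  have e4 : R (J v) (J u) u v = - R u v u v := by
    rw [hJ1 v u u v, as1 v u u v]
  have e5 : R u v (J v) (J u) = - R u v u v := by
    rw [as2 u v (J v) (J u), hJ2' u v u v]
  have eB : R (J v) v (J v) v = R v (J v) v (J v) := by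
    rw [as1 (J v) v (J v) v, as2 v (J v) (J v) v, neg_neg]
  have e7 : R u (J v) (J u) v = - R u (J v) u (J v) := by
    have := hJ2' u (J v) (J u) v
    rw [hJ2 u, n3] at this
    linarith [this]
  have e6 : R u v u v = R u (J u) v (J v) - R u (J v) u (J v) := by
    have hb := bi u (J u) v (J v)
    rw [e7, e5] at hb
    linarith [hb]
  simp only [Hol, map_add, map_sub, map_neg, LinearMap.map_smul, hJ2, smul_neg, sub_eq_add_neg,
    add1, add2, add3, add4, n1, n2, n3, n4, smul1, smul2, smul3, smul4]
  rw [e1, e2, e3, e4, e5, eB, e6]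
  ring
end

section
/- Let R be a Kähler curvature tensor and suppose u, v, J(u), J(v) are orthonormal. Then R(u-J(v), J(u)+v, u+J(v), J(u)-v) = H(u) + H(v) + 2R(u,J(u),v,J(v)) - 4R(u,v,u,v), where H(w) := R(w,J(w),w,J(w)). -/
open RealInnerProductSpace

variable {V : Type*} [NormedAddCommGroup V] [InnerProductSpace ℝ V]

theorem statement7 (J : V →ₗ[ℝ] V) (hJ2 : ∀ v, J (J v) = -v)
    (hJi : ∀ v w : V, ⟪J v, J w⟫ = ⟪v, w⟫)
    (R : V → V → V → V → ℝ) (hR : IsKahlerCurvatureTensor J R)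
    (u v : V) (hu : ‖u‖ = 1) (hv : ‖v‖ = 1)
    (huv : ⟪u, v⟫ = 0) (hJuv : ⟪J u, v⟫ = 0) :
    R (u - J v) (J u + v) (u + J v) (J u - v)
      = Hol J R u + Hol J R v + 2 * R u (J u) v (J v) - 4 * R u v u v := by
  obtain ⟨hK, j1, j2⟩ := hR
  have n1 : ∀ x y z w, R (-x) y z w = -R x y z w := fun x y z w => by
    rw [← neg_one_smul ℝ x, hK.smul1]; ring
  have n4 : ∀ x y z w, R x y z (-w) = -R x y z w := fun x y z w => by
    rw [← neg_one_smul ℝ w, hK.smul4]; ring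
  have jm34 : ∀ x y z w, R x y (J z) w = -R x y z (J w) := by
    intro x y z w
    have h := j2 x y z (J w)
    rw [hJ2, n4] at h
    linarith
  have E1 : R u (J u) (J v) (J u) = -R u (J u) u v := by
    rw [jm34, hJ2, n4, hK.antisym2 u (J u) v u]; ring
  have E2 : R u (J u) (J v) v = -R u (J u) v (J v) := jm34 u (J u) v v
  have E3 : R u v u (J u) = R u (J u) u v := hK.pairsym u (J u) u v
  have E4 : R u v (J v) (J u) = -R u v u v := by
    rw [j2, hK.antisym2 u v v u, hK.antisym2 u v u v, neg_neg]
  have E5 : R u v (J v) v = -R u v v (J v) := jm34 u v v v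
  have E6 : R (J v) (J u) u (J u) = -R u (J u) u v := by
    rw [j1, hK.antisym1 v u, E3]
  have E7 : R (J v) (J u) u v = -R u v u v := by
    rw [j1, hK.antisym1 v u]
  have E8 : R (J v) (J u) (J v) (J u) = R u v u v := by
    rw [j1, hK.antisym1 v u, E4, neg_neg]
  have E9 : R (J v) (J u) (J v) v = R u v v (J v) := by
    rw [j1, hK.antisym1 v u, E5, neg_neg]
  have E10 : R (J v) v u (J u) = -R u (J u) v (J v) := by
    rw [hK.pairsym u (J u) (J v) v, E2]
  have E11 : R (J v) v u v = -R u v v (J v) := by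
    rw [hK.pairsym u v (J v) v, E5]
  have E12 : R (J v) v (J v) (J u) = R u v v (J v) := by
    rw [jm34, hJ2, n4, hK.pairsym v u (J v) v, hK.antisym1 v u, E5]; ring
  have E13 : R (J v) v (J v) v = R v (J v) v (J v) := by
    rw [hK.antisym1 (J v) v, hK.antisym2 v (J v) (J v) v]; ring
  simp only [sub_eq_add_neg, hK.add1, hK.add2, hK.add3, hK.add4, n1, n4, Hol]
  linarith [E1, E2, E3, E4, E5, E6, E7, E8, E9, E10, E11, E12, E13]
end

section
/- Berger's estimate: Let R be a curvature tensor on a real inner product space such that -α ≤ R(X,Y,X,Y) ≤ -1/4 for every orthonormal pair X, Y (with α ≥ 1/4). Then for every orthonormal set {X,Y,Z,W}, |R(X,Y,Z,W)| ≤ (2/3)(α - 1/4). -/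
open RealInnerProductSpace

variable {V : Type*} [NormedAddCommGroup V] [InnerProductSpace ℝ V]

lemma unit_combo (Y Z : V) (hY : ‖Y‖ = 1) (hZ : ‖Z‖ = 1) (hYZ : ⟪Y, Z⟫ = 0) :
    ‖(Real.sqrt 2)⁻¹ • (Y + Z)‖ = 1 := by
  have h2 : ‖Y + Z‖ ^ 2 = 2 := by
    rw [norm_add_sq_real, hY, hZ, hYZ]; ring
  have h3 : ‖Y + Z‖ = Real.sqrt 2 := by
    rw [← h2, Real.sqrt_sq (norm_nonneg _)]
  rw [norm_smul, h3, norm_inv, Real.norm_eq_abs, abs_of_nonneg (Real.sqrt_nonneg 2),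
    inv_mul_cancel₀ (by positivity : Real.sqrt 2 ≠ 0)]

lemma berger_aux1 (R : V → V → V → V → ℝ) (hR : IsCurvatureTensor R) (α : ℝ)
    (hpinch : ∀ X Y : V, ‖X‖ = 1 → ‖Y‖ = 1 → ⟪X, Y⟫ = 0 →
      -α ≤ R X Y X Y ∧ R X Y X Y ≤ -(1/4))
    (X Y Z : V) (hX : ‖X‖ = 1) (hY : ‖Y‖ = 1) (hZ : ‖Z‖ = 1)
    (hXY : ⟪X, Y⟫ = 0) (hXZ : ⟪X, Z⟫ = 0) (hYZ : ⟪Y, Z⟫ = 0) :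
    |R X Y X Z| ≤ (α - 1/4) / 2 := by
  set c : ℝ := (Real.sqrt 2)⁻¹ with hc
  have hc2 : c * c = 1/2 := by
    rw [hc, ← mul_inv, Real.mul_self_sqrt (by norm_num : (0:ℝ) ≤ 2)]; norm_num
  have hZ' : ‖-Z‖ = 1 := by rw [norm_neg]; exact hZ
  have hYZ' : ⟪Y, -Z⟫ = 0 := by rw [inner_neg_right, hYZ, neg_zero]
  have hup : ‖c • (Y + Z)‖ = 1 := unit_combo Y Z hY hZ hYZ
  have hum : ‖c • (Y + -Z)‖ = 1 := unit_combo Y (-Z) hY hZ' hYZ'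
  have hop : ⟪X, c • (Y + Z)⟫ = 0 := by
    rw [real_inner_smul_right, inner_add_right, hXY, hXZ]; ring
  have hom : ⟪X, c • (Y + -Z)⟫ = 0 := by
    rw [real_inner_smul_right, inner_add_right, inner_neg_right, hXY, hXZ]; ring
  have key : ∀ u v : V, R X (u + v) X (u + v)
      = R X u X u + R X u X v + R X v X u + R X v X v := by
    intro u v
    rw [hR.add2, hR.add4, hR.add4]; ring
  have hsym : R X Z X Y = R X Y X Z := hR.pairsym X Y X Z
  have hnegv : ∀ u w : V, R X (-u) X w = -R X u X w := by
    intro u w; rw [← neg_one_smul ℝ u, hR.smul2]; ring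
  have hnegw : ∀ u w : V, R X u X (-w) = -R X u X w := by
    intro u w; rw [← neg_one_smul ℝ w, hR.smul4]; ring
  have hp := hpinch X (c • (Y + Z)) hX hup hop
  have hm := hpinch X (c • (Y + -Z)) hX hum hom
  have ep : R X (c • (Y + Z)) X (c • (Y + Z))
      = 1/2 * (R X Y X Y + 2 * R X Y X Z + R X Z X Z) := by
    rw [hR.smul2, hR.smul4, key, hsym, ← mul_assoc, hc2]; ring
  have em : R X (c • (Y + -Z)) X (c • (Y + -Z))
      = 1/2 * (R X Y X Y - 2 * R X Y X Z + R X Z X Z) := by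
    rw [hR.smul2, hR.smul4, key]
    simp only [hnegv, hnegw]
    rw [hsym, ← mul_assoc, hc2]; ring
  rw [ep] at hp
  rw [em] at hm
  rw [abs_le]
  constructor <;> linarith [hp.1, hp.2, hm.1, hm.2]

lemma berger_aux2 (R : V → V → V → V → ℝ) (hR : IsCurvatureTensor R) (α : ℝ)
    (hpinch : ∀ X Y : V, ‖X‖ = 1 → ‖Y‖ = 1 → ⟪X, Y⟫ = 0 →
      -α ≤ R X Y X Y ∧ R X Y X Y ≤ -(1/4))
    (X Y Z W : V) (hX : ‖X‖ = 1) (hY : ‖Y‖ = 1) (hZ : ‖Z‖ = 1) (hW : ‖W‖ = 1)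
    (hXY : ⟪X, Y⟫ = 0) (hXZ : ⟪X, Z⟫ = 0) (hXW : ⟪X, W⟫ = 0)
    (hYZ : ⟪Y, Z⟫ = 0) (hYW : ⟪Y, W⟫ = 0) (hZW : ⟪Z, W⟫ = 0) :
    |R X Y W Z + R W Y X Z| ≤ α - 1/4 := by
  set c : ℝ := (Real.sqrt 2)⁻¹ with hc
  have hc2 : c * c = 1/2 := by
    rw [hc, ← mul_inv, Real.mul_self_sqrt (by norm_num : (0:ℝ) ≤ 2)]; norm_num
  have hW' : ‖-W‖ = 1 := by rw [norm_neg]; exact hW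
  have hXW' : ⟪X, -W⟫ = 0 := by rw [inner_neg_right, hXW, neg_zero]
  have hWY : ⟪W, Y⟫ = 0 := by rwa [inner_eq_zero_symm] at hYW
  have hWZ : ⟪W, Z⟫ = 0 := by rwa [inner_eq_zero_symm] at hZW
  have hup : ‖c • (X + W)‖ = 1 := unit_combo X W hX hW hXW
  have hum : ‖c • (X + -W)‖ = 1 := unit_combo X (-W) hX hW' hXW'
  have houpY : ⟪c • (X + W), Y⟫ = 0 := by
    rw [real_inner_smul_left, inner_add_left, hXY, hWY]; ring
  have houpZ : ⟪c • (X + W), Z⟫ = 0 := by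
    rw [real_inner_smul_left, inner_add_left, hXZ, hWZ]; ring
  have houmY : ⟪c • (X + -W), Y⟫ = 0 := by
    rw [real_inner_smul_left, inner_add_left, inner_neg_left, hXY, hWY]; ring
  have houmZ : ⟪c • (X + -W), Z⟫ = 0 := by
    rw [real_inner_smul_left, inner_add_left, inner_neg_left, hXZ, hWZ]; ring
  have hp := berger_aux1 R hR α hpinch (c • (X + W)) Y Z hup hY hZ houpY houpZ hYZ
  have hm := berger_aux1 R hR α hpinch (c • (X + -W)) Y Z hum hY hZ houmY houmZ hYZ
  have key : ∀ u v : V, R (u + v) Y (u + v) Z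
      = R u Y u Z + R u Y v Z + R v Y u Z + R v Y v Z := by
    intro u v
    rw [hR.add1, hR.add3, hR.add3]; ring
  have hneg1 : ∀ u w z : V, R (-u) Y z w = -R u Y z w := by
    intro u w z; rw [← neg_one_smul ℝ u, hR.smul1]; ring
  have hneg3 : ∀ u w z : V, R z Y (-u) w = -R z Y u w := by
    intro u w z; rw [← neg_one_smul ℝ u, hR.smul3]; ring
  have ep : R (c • (X + W)) Y (c • (X + W)) Z
      = 1/2 * (R X Y X Z + R X Y W Z + R W Y X Z + R W Y W Z) := by
    rw [hR.smul1, hR.smul3, key, ← mul_assoc, hc2]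
    try ring
  have em : R (c • (X + -W)) Y (c • (X + -W)) Z
      = 1/2 * (R X Y X Z - R X Y W Z - R W Y X Z + R W Y W Z) := by
    rw [hR.smul1, hR.smul3, key]
    simp only [hneg1, hneg3]
    rw [← mul_assoc, hc2]; ring
  rw [ep] at hp
  rw [em] at hm
  rw [abs_le] at hp hm ⊢
  constructor <;> linarith [hp.1, hp.2, hm.1, hm.2]

theorem statement8 (R : V → V → V → V → ℝ) (hR : IsCurvatureTensor R)
    (α : ℝ) (hα : 1/4 ≤ α)
    (hpinch : ∀ X Y : V, ‖X‖ = 1 → ‖Y‖ = 1 → ⟪X, Y⟫ = 0 →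
      -α ≤ R X Y X Y ∧ R X Y X Y ≤ -(1/4))
    (X Y Z W : V) (hX : ‖X‖ = 1) (hY : ‖Y‖ = 1) (hZ : ‖Z‖ = 1) (hW : ‖W‖ = 1)
    (hXY : ⟪X, Y⟫ = 0) (hXZ : ⟪X, Z⟫ = 0) (hXW : ⟪X, W⟫ = 0)
    (hYZ : ⟪Y, Z⟫ = 0) (hYW : ⟪Y, W⟫ = 0) (hZW : ⟪Z, W⟫ = 0) :
    |R X Y Z W| ≤ 2/3 * (α - 1/4) := by
  have h1 := berger_aux2 R hR α hpinch X Y Z W hX hY hZ hW hXY hXZ hXW hYZ hYW hZW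
  have h2 := berger_aux2 R hR α hpinch X Y W Z hX hY hW hZ hXY hXW hXZ hYW hYZ
    (by rw [real_inner_comm]; exact hZW)
  have e1 : R X Y W Z = -R X Y Z W := by have := hR.antisym2 X Y Z W; linarith
  have e2 : R W Y X Z = R X Z W Y := hR.pairsym X Z W Y
  have e3 : R Z Y X W = -R X W Y Z := by
    have a := hR.pairsym X W Z Y
    have b := hR.antisym2 X W Y Z
    linarith
  have hb := hR.bianchi X Y Z W
  rw [e1, e2] at h1
  rw [e3] at h2
  rw [abs_le] at h1 h2 ⊢
  constructor <;> linarith [h1.1, h1.2, h2.1, h2.2]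
end

section
/- Let R be a Kähler curvature tensor on V (real dimension 2n ≥ 4) with all sectional curvatures K satisfying -1-δ ≤ K ≤ -1/4 where δ ≤ η/3 for some η > 0, and assume the Berger bound holds. Then for every unit vector u, the holomorphic sectional curvature H(u) = R(u,J(u),u,J(u)) satisfies |H(u) + 1| < η. -/
open RealInnerProductSpace

variable {V : Type*} [NormedAddCommGroup V] [InnerProductSpace ℝ V]

theorem statement11 [FiniteDimensional ℝ V] (n : ℕ) (hn : 2 ≤ n)
    (hdim : Module.finrank ℝ V = 2 * n)
    (J : V →ₗ[ℝ] V) (hJ2 : ∀ v, J (J v) = -v)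
    (hJi : ∀ v w : V, ⟪J v, J w⟫ = ⟪v, w⟫)
    (R : V → V → V → V → ℝ) (hR : IsKahlerCurvatureTensor J R)
    (η δ : ℝ) (hη : 0 < η) (hδ : 0 < δ) (hδη : δ ≤ η / 3)
    (hpinch : ∀ x y : V, ‖x‖ = 1 → ‖y‖ = 1 → ⟪x, y⟫ = 0 →
      -1 - δ ≤ R x y x y ∧ R x y x y ≤ -(1/4))
    (hberger : ∀ x y z t : V, ‖x‖ = 1 → ‖y‖ = 1 → ‖z‖ = 1 → ‖t‖ = 1 →
      ⟪x, y⟫ = 0 → ⟪x, z⟫ = 0 → ⟪x, t⟫ = 0 →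
      ⟪y, z⟫ = 0 → ⟪y, t⟫ = 0 → ⟪z, t⟫ = 0 →
      |R x y z t| ≤ 1/2 + η/6)
    (u : V) (hu : ‖u‖ = 1) :
    |Hol J R u + 1| < η := by
  obtain ⟨hC, hI1, hI2⟩ := hR
  -- basic facts about J and inner products
  have hJnorm : ∀ w : V, ‖J w‖ = ‖w‖ := by
    intro w
    have : ⟪J w, J w⟫ = ⟪w, w⟫ := hJi w w
    rw [real_inner_self_eq_norm_sq, real_inner_self_eq_norm_sq] at this
    nlinarith [norm_nonneg (J w), norm_nonneg w]
  have hwJw : ∀ w : V, ⟪w, J w⟫ = 0 := by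
    intro w
    have h1 : ⟪J w, J (J w)⟫ = ⟪w, J w⟫ := hJi w (J w)
    rw [hJ2, inner_neg_right, real_inner_comm] at h1
    linarith
  -- negation lemmas for R
  have neg1 : ∀ x y z w, R (-x) y z w = -R x y z w := fun x y z w => by
    rw [← neg_one_smul ℝ, hC.smul1]; ring
  have neg2 : ∀ x y z w, R x (-y) z w = -R x y z w := fun x y z w => by
    rw [← neg_one_smul ℝ, hC.smul2]; ring
  have neg3 : ∀ x y z w, R x y (-z) w = -R x y z w := fun x y z w => by
    rw [← neg_one_smul ℝ, hC.smul3]; ring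
  have neg4 : ∀ x y z w, R x y z (-w) = -R x y z w := fun x y z w => by
    rw [← neg_one_smul ℝ, hC.smul4]; ring
  -- find v orthogonal to u and J u
  set K : Submodule ℝ V := Submodule.span ℝ {u, J u} with hK
  have hKle : Module.finrank ℝ K ≤ 2 := by
    classical
    have hset : ({u, J u} : Set V) = (↑({u, J u} : Finset V) : Set V) := by simp
    rw [hK, hset]
    refine le_trans (finrank_span_finset_le_card _) ?_
    exact (Finset.card_insert_le _ _).trans (by simp)
  have hKorth : K ᗮ ≠ ⊥ := by
    intro hbot
    have h1 : Module.finrank ℝ K + Module.finrank ℝ (K ᗮ) = Module.finrank ℝ V :=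
      K.finrank_add_finrank_orthogonal
    rw [hbot, finrank_bot, hdim] at h1
    omega
  obtain ⟨w, hwK, hw0⟩ := Submodule.ne_bot_iff _ |>.mp hKorth
  have hworth : ∀ x ∈ K, ⟪x, w⟫ = 0 := fun x hx => (Submodule.mem_orthogonal K w).mp hwK x hx
  have huw : ⟪u, w⟫ = 0 := hworth u (Submodule.subset_span (by simp))
  have hJuw : ⟪J u, w⟫ = 0 := hworth (J u) (Submodule.subset_span (by simp))
  set v : V := ‖w‖⁻¹ • w with hv
  have hwn : ‖w‖ ≠ 0 := norm_ne_zero_iff.mpr hw0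
  have hvn : ‖v‖ = 1 := by
    rw [hv, norm_smul, norm_inv, norm_norm, inv_mul_cancel₀ hwn]
  have huv : ⟪u, v⟫ = 0 := by rw [hv, inner_smul_right, huw]; ring
  have hJuv : ⟪J u, v⟫ = 0 := by rw [hv, inner_smul_right, hJuw]; ring
  have huJv : ⟪u, J v⟫ = 0 := by
    have h1 : ⟪J u, J (J v)⟫ = ⟪u, J v⟫ := hJi u (J v)
    rw [hJ2, inner_neg_right, hJuv] at h1
    linarith
  have hJuJv : ⟪J u, J v⟫ = 0 := by rw [hJi, huv]
  have hvJv : ⟪v, J v⟫ = 0 := hwJw v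
  have hJvn : ‖J v‖ = 1 := by rw [hJnorm, hvn]
  have hJun : ‖J u‖ = 1 := by rw [hJnorm, hu]
  -- term reductions
  have h3 : R u (J u) (J v) (J u) = -R u (J u) u v := by
    have e := hI2 u (J u) v u
    rw [e, hC.antisym2 u (J u) v u]
  have h4 : R u (J u) (J v) v = -R u (J u) v (J v) := by
    have e := hI2 u (J u) v (J v)
    rw [hJ2, neg4] at e
    linarith
  have h5 : R u v u (J u) = R u (J u) u v := hC.pairsym u (J u) u v
  have h7 : R u v (J v) (J u) = -R u v u v := by
    have e := hI2 u v v u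
    rw [e, hC.antisym2 u v v u]
  have h8 : R u v (J v) v = -R u v v (J v) := by
    have e := hI2 u v v (J v)
    rw [hJ2, neg4] at e
    linarith
  have h9 : R (J v) (J u) u (J u) = -R u (J u) u v := by
    rw [hI1 v u u (J u), hC.antisym1 v u u (J u), h5]
  have h10 : R (J v) (J u) u v = -R u v u v := by
    rw [hI1 v u u v, hC.antisym1 v u u v]
  have h11 : R (J v) (J u) (J v) (J u) = R u v u v := by
    rw [hI1 v u (J v) (J u), hI2 v u v u, hC.antisym1 v u v u,
      hC.antisym2 u v v u]
    ring
  have h12 : R (J v) (J u) (J v) v = R u v v (J v) := by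
    rw [hI1 v u (J v) v, hC.antisym1 v u (J v) v, h8]
    ring
  have h13 : R (J v) v u (J u) = -R u (J u) v (J v) := by
    rw [hC.pairsym u (J u) (J v) v, h4]
  have h14 : R (J v) v u v = -R u v v (J v) := by
    rw [hC.pairsym u v (J v) v, h8]
  have h15 : R (J v) v (J v) (J u) = R u v v (J v) := by
    rw [hC.pairsym (J v) (J u) (J v) v, h12]
  have h16 : R (J v) v (J v) v = R v (J v) v (J v) := by
    rw [hC.antisym1 (J v) v (J v) v, hC.antisym2 v (J v) (J v) v]
    ring
  -- Bianchi / Kähler identity: R(u,Ju,v,Jv) = K(u,v) + K(u,Jv)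
  have hBu : R u (J u) v (J v) = R u v u v + R u (J v) u (J v) := by
    have hb := hC.bianchi u (J u) v (J v)
    have e1 : R u (J v) (J u) v = -R u (J v) u (J v) := by
      have e := hI2 u (J v) u (J v)
      rw [hJ2, neg4] at e
      linarith
    rw [h7, e1] at hb
    linarith
  -- full expansion of R(u - Jv, Ju - v, u - Jv, Ju - v)
  have expand : R (u - J v) (J u - v) (u - J v) (J u - v)
      = R u (J u) u (J u) + R v (J v) v (J v) - 2 * R u (J u) v (J v) := by
    simp only [sub_eq_add_neg, hC.add1, hC.add2, hC.add3, hC.add4,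
      neg1, neg2, neg3, neg4]
    rw [h3, h4, h5, h7, h8, h9, h10, h11, h12, h13, h14, h15, h16]
    ring
  -- the orthonormal pair x, t
  set c : ℝ := (Real.sqrt 2)⁻¹ with hc
  have hs2 : Real.sqrt 2 ≠ 0 := by positivity
  set x : V := c • (u - J v) with hx
  set t : V := c • (J u - v) with ht
  have hnormsub : ∀ a b : V, ‖a‖ = 1 → ‖b‖ = 1 → ⟪a, b⟫ = 0 → ‖a - b‖ = Real.sqrt 2 := by
    intro a b ha hb hab
    have : ‖a - b‖ ^ 2 = 2 := by
      rw [← real_inner_self_eq_norm_sq]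
      have hba : ⟪b, a⟫ = 0 := by rw [real_inner_comm]; exact hab
      rw [inner_sub_sub_self, hab, hba, real_inner_self_eq_norm_sq,
        real_inner_self_eq_norm_sq, ha, hb]
      ring
    have h0 : ‖a - b‖ = Real.sqrt (‖a - b‖ ^ 2) := (Real.sqrt_sq (norm_nonneg _)).symm
    rw [h0, this]
  have hxn : ‖x‖ = 1 := by
    rw [hx, norm_smul, hnormsub u (J v) hu hJvn huJv, hc, norm_inv,
      Real.norm_eq_abs, abs_of_nonneg (Real.sqrt_nonneg 2), inv_mul_cancel₀ hs2]
  have htn : ‖t‖ = 1 := by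
    have hJuv' : ⟪J u, v⟫ = 0 := hJuv
    rw [ht, norm_smul, hnormsub (J u) v hJun hvn hJuv', hc, norm_inv,
      Real.norm_eq_abs, abs_of_nonneg (Real.sqrt_nonneg 2), inv_mul_cancel₀ hs2]
  have hxt : ⟪x, t⟫ = 0 := by
    have hJvJu : ⟪J v, J u⟫ = 0 := by rw [hJi, real_inner_comm]; exact huv
    have hJvv : ⟪J v, v⟫ = 0 := by rw [real_inner_comm]; exact hvJv
    rw [hx, ht, real_inner_smul_left, real_inner_smul_right]
    simp only [inner_sub_left, inner_sub_right]
    rw [hwJw u, huv, hJvJu, hJvv]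
    ring
  have hc2 : c ^ 2 = 1/2 := by
    rw [hc, ← Real.sqrt_inv]
    rw [Real.sq_sqrt (by norm_num : (0:ℝ) ≤ (2:ℝ)⁻¹)]
    norm_num
  have hRxt : R x t x t = c^2 * c^2 *
      (R u (J u) u (J u) + R v (J v) v (J v) - 2 * R u (J u) v (J v)) := by
    rw [hx, ht, hC.smul1, hC.smul2, hC.smul3, hC.smul4, expand]
    ring
  -- pinching applications
  have p1 := hpinch u (J u) hu hJun (hwJw u)
  have p2 := hpinch v (J v) hvn hJvn hvJv
  have p3 := hpinch u v hu hvn huv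
  have p4 := hpinch u (J v) hu hJvn huJv
  have p5 := hpinch x t hxn htn hxt
  have hHol : Hol J R u = R u (J u) u (J u) := rfl
  rw [hHol, abs_lt]
  constructor
  · linarith [p1.1]
  · rw [hRxt, hc2] at p5
    linarith [p5.2, p2.1, p3.2, p4.2, hBu]
end

section
/- Quarter-pinched Kähler rigidity (exact case): If R is a Kähler curvature tensor on a real inner product space V of dimension 2n ≥ 4 whose sectional curvatures satisfy -1 ≤ K ≤ -1/4 for all orthonormal pairs, then R = R₀, the complex hyperbolic curvature tensor. -/
open RealInnerProductSpace

variable {V : Type*} [NormedAddCommGroup V] [InnerProductSpace ℝ V]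

section QPKAux

variable {V : Type*} [NormedAddCommGroup V] [InnerProductSpace ℝ V]
variable {J : V →ₗ[ℝ] V} {R S D : V → V → V → V → ℝ}

namespace IsCurvatureTensor

lemma zero1 (h : IsCurvatureTensor R) (y z w : V) : R 0 y z w = 0 := by
  simpa using h.smul1 0 0 y z w

lemma zero2 (h : IsCurvatureTensor R) (x z w : V) : R x 0 z w = 0 := by
  simpa using h.smul2 0 x 0 z w

lemma neg1 (h : IsCurvatureTensor R) (x y z w : V) : R (-x) y z w = -R x y z w := by
  simpa using h.smul1 (-1) x y z w

lemma neg2 (h : IsCurvatureTensor R) (x y z w : V) : R x (-y) z w = -R x y z w := by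
  simpa using h.smul2 (-1) x y z w

lemma neg3 (h : IsCurvatureTensor R) (x y z w : V) : R x y (-z) w = -R x y z w := by
  simpa using h.smul3 (-1) x y z w

lemma neg4 (h : IsCurvatureTensor R) (x y z w : V) : R x y z (-w) = -R x y z w := by
  simpa using h.smul4 (-1) x y z w

lemma sub1 (h : IsCurvatureTensor R) (x x' y z w : V) :
    R (x - x') y z w = R x y z w - R x' y z w := by
  rw [sub_eq_add_neg, h.add1, h.neg1]; ring

lemma sub2 (h : IsCurvatureTensor R) (x y y' z w : V) :
    R x (y - y') z w = R x y z w - R x y' z w := by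
  rw [sub_eq_add_neg, h.add2, h.neg2]; ring

lemma sub3 (h : IsCurvatureTensor R) (x y z z' w : V) :
    R x y (z - z') w = R x y z w - R x y z' w := by
  rw [sub_eq_add_neg, h.add3, h.neg3]; ring

lemma sub4 (h : IsCurvatureTensor R) (x y z w w' : V) :
    R x y z (w - w') = R x y z w - R x y z w' := by
  rw [sub_eq_add_neg, h.add4, h.neg4]; ring

end IsCurvatureTensor

namespace IsKahlerCurvatureTensor

lemma k1 (h : IsKahlerCurvatureTensor J R) (hJ2 : ∀ v : V, J (J v) = -v) (x y z w : V) :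
    R x (J y) z w = R y (J x) z w := by
  have h1 := h.Jinv1 x (J y) z w
  rw [hJ2 y] at h1
  rw [h.toCurv.neg2] at h1
  have h2 := h.toCurv.antisym1 y (J x) z w
  linarith

lemma k2 (h : IsKahlerCurvatureTensor J R) (hJ2 : ∀ v : V, J (J v) = -v) (z w x y : V) :
    R z w x (J y) = R z w y (J x) :=
  calc R z w x (J y) = R x (J y) z w := h.toCurv.pairsym x (J y) z w
    _ = R y (J x) z w := h.k1 hJ2 x y z w
    _ = R z w y (J x) := (h.toCurv.pairsym y (J x) z w).symm

/-- `A = B + C` : `R(x,Jx,y,Jy) = R(x,y,x,y) + R(x,Jy,x,Jy)`. -/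
lemma I4 (h : IsKahlerCurvatureTensor J R) (hJ2 : ∀ v : V, J (J v) = -v) (x y : V) :
    R x (J x) y (J y) = R x y x y + R x (J y) x (J y) := by
  have hb := h.toCurv.bianchi x (J x) y (J y)
  -- second term: R x (J y) (J x) y
  have h2 : R x (J y) (J x) y = - R x (J y) x (J y) := by
    have e1 : R x (J y) (J x) y = R (J x) y x (J y) := h.toCurv.pairsym _ _ _ _
    have e2 : R (J x) y x (J y) = - R (J x) (J (J y)) x (J y) := by
      rw [hJ2 y, h.toCurv.neg2]; ring
    have e3 : R (J x) (J (J y)) x (J y) = R x (J y) x (J y) := h.Jinv1 _ _ _ _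
    rw [e1, e2, e3]
  -- third term: R x y (J y) (J x)
  have h3 : R x y (J y) (J x) = - R x y x y := by
    have e1 : R x y (J y) (J x) = - R x y (J x) (J y) := h.toCurv.antisym2 _ _ _ _
    rw [e1, h.Jinv2]
  rw [h2, h3] at hb
  linarith

/-- Key expansion: the sectional value of the totally real plane `(x+y, Jx−Jy)`. -/
lemma I3 (h : IsKahlerCurvatureTensor J R) (hJ2 : ∀ v : V, J (J v) = -v) (x y : V) :
    R (x + y) (J x - J y) (x + y) (J x - J y)
      = R x (J x) x (J x) + R y (J y) y (J y) - 2 * R x (J x) y (J y) := by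
  have hc := h.toCurv
  have hQ2 : R x (J y) x (J x) = R x (J x) x (J y) := hc.pairsym x (J x) x (J y)
  have hQ3 : R x (J x) y (J x) = R x (J x) x (J y) := by
    rw [hc.pairsym y (J x) x (J x), h.k1 hJ2 y x, hQ2]
  have hQ4 : R y (J x) x (J x) = R x (J x) x (J y) := by
    rw [h.k1 hJ2 y x, hQ2]
  have hC2 : R x (J y) y (J x) = R x (J y) x (J y) := (h.k2 hJ2 x (J y) x y).symm
  have hC3 : R y (J x) x (J y) = R x (J y) x (J y) := h.k1 hJ2 y x x (J y)
  have hC4 : R y (J x) y (J x) = R x (J y) x (J y) := by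
    rw [h.k1 hJ2 y x y (J x), hC2]
  have hT2 : R y (J y) x (J y) = R x (J y) y (J y) := hc.pairsym x (J y) y (J y)
  have hT3 : R y (J x) y (J y) = R x (J y) y (J y) := h.k1 hJ2 y x y (J y)
  have hT4 : R y (J y) y (J x) = R x (J y) y (J y) := by
    rw [← h.k2 hJ2 y (J y) x y, hT2]
  have hA2 : R y (J y) x (J x) = R x (J x) y (J y) := hc.pairsym x (J x) y (J y)
  simp only [hc.add1, hc.add3, hc.sub2, hc.sub4]
  rw [hQ2, hQ3, hQ4, hC2, hC3, hC4, hT2, hT3, hT4, hA2]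
  ring

/-- Second-order polarization of the holomorphic sectional curvature. -/
lemma G2 (h : IsKahlerCurvatureTensor J R) (hJ2 : ∀ v : V, J (J v) = -v) (u v : V) :
    R (u + v) (J u + J v) (u + v) (J u + J v)
      + R (u - v) (J u - J v) (u - v) (J u - J v)
      = 2 * R u (J u) u (J u) + 2 * R v (J v) v (J v)
        + 4 * R v (J v) u (J u) + 8 * R v (J u) v (J u) := by
  have hc := h.toCurv
  have hP34 : R u (J u) v (J v) = R v (J v) u (J u) := hc.pairsym v (J v) u (J u)
  have hP14 : R v (J u) u (J v) = R v (J u) v (J u) := h.k2 hJ2 v (J u) u v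
  have hP23 : R u (J v) v (J u) = R v (J u) v (J u) := h.k1 hJ2 u v v (J u)
  have hP24 : R u (J v) u (J v) = R v (J u) v (J u) := by
    rw [h.k1 hJ2 u v u (J v), hP14]
  simp only [hc.add1, hc.add2, hc.add3, hc.add4, hc.sub1, hc.sub2, hc.sub3, hc.sub4]
  rw [hP34, hP14, hP23, hP24]
  ring

/-- difference of two Kähler curvature tensors is one. -/
lemma sub (h1 : IsKahlerCurvatureTensor J R) (h2 : IsKahlerCurvatureTensor J S) :
    IsKahlerCurvatureTensor J (fun x y z w => R x y z w - S x y z w) := by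
  refine ⟨⟨?_, ?_, ?_, ?_, ?_, ?_, ?_, ?_, ?_, ?_, ?_, ?_⟩, ?_, ?_⟩ <;> intros <;> try dsimp only
  · rw [h1.toCurv.add1, h2.toCurv.add1]; ring
  · rw [h1.toCurv.smul1, h2.toCurv.smul1]; ring
  · rw [h1.toCurv.add2, h2.toCurv.add2]; ring
  · rw [h1.toCurv.smul2, h2.toCurv.smul2]; ring
  · rw [h1.toCurv.add3, h2.toCurv.add3]; ring
  · rw [h1.toCurv.smul3, h2.toCurv.smul3]; ring
  · rw [h1.toCurv.add4, h2.toCurv.add4]; ring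
  · rw [h1.toCurv.smul4, h2.toCurv.smul4]; ring
  · rw [h1.toCurv.antisym1 _ _ _ _, h2.toCurv.antisym1 _ _ _ _]; ring
  · rw [h1.toCurv.antisym2 _ _ _ _, h2.toCurv.antisym2 _ _ _ _]; ring
  · rw [h1.toCurv.pairsym _ _ _ _, h2.toCurv.pairsym _ _ _ _]
  · rename_i x y z w
    have := h1.toCurv.bianchi x y z w
    have := h2.toCurv.bianchi x y z w
    linarith
  · rw [h1.Jinv1, h2.Jinv1]
  · rw [h1.Jinv2, h2.Jinv2]

/-- A Kähler curvature tensor with vanishing holomorphic sectional curvature vanishes. -/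
lemma eq_zero_of_hol_zero (h : IsKahlerCurvatureTensor J D) (hJ2 : ∀ v : V, J (J v) = -v)
    (h0 : ∀ u, D u (J u) u (J u) = 0) (x y z w : V) : D x y z w = 0 := by
  have hc := h.toCurv
  -- S2 identity
  have S2 : ∀ u v : V, D v (J v) u (J u) + 2 * D v (J u) v (J u) = 0 := by
    intro u v
    have hg := h.G2 hJ2 u v
    have e1 : D (u + v) (J u + J v) (u + v) (J u + J v) = 0 := by
      rw [← map_add]; exact h0 (u + v)
    have e2 : D (u - v) (J u - J v) (u - v) (J u - J v) = 0 := by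
      rw [← map_sub]; exact h0 (u - v)
    rw [e1, e2, h0 u, h0 v] at hg
    linarith
  -- sectional curvatures vanish
  have sec0 : ∀ a b : V, D a b a b = 0 := by
    intro a b
    have h1 := S2 b a           -- A + 2C = 0
    have h2 := S2 (J b) a       -- fiddle to A + 2B = 0
    rw [hJ2 b] at h2
    rw [hc.neg4, hc.neg2, hc.neg4] at h2
    -- h2 : - D a (J a) (J b) b + 2 * (- (- D a b a b)) = 0
    have h3 : D a (J a) (J b) b = - D a (J a) b (J b) := by
      rw [hc.antisym2 a (J a) (J b) b]
    have h4 := h.I4 hJ2 a b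
    -- combine
    rw [h3] at h2
    linarith
  -- polarization
  have polar1 : ∀ a b c : V, D a b c b = 0 := by
    intro a b c
    have h1 := sec0 (a + c) b
    rw [hc.add1, hc.add3, hc.add3] at h1
    have h2 : D c b a b = D a b c b := hc.pairsym a b c b
    rw [sec0 a b, sec0 c b, h2] at h1
    linarith
  have polar2 : ∀ a b c d : V, D a b c d + D a d c b = 0 := by
    intro a b c d
    have h1 := polar1 a (b + d) c
    rw [hc.add2, hc.add4, hc.add4] at h1
    rw [polar1 a b c, polar1 a d c] at h1
    linarith
  have step3 : ∀ a b c d : V, D a b c d = D a d b c := by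
    intro a b c d
    have h1 := polar2 a b c d
    have h2 := hc.antisym2 a d b c
    linarith
  have hb := hc.bianchi x y z w
  rw [← step3 x y z w] at hb
  have h5 : D x z w y = D x y z w := by rw [step3 x y z w, step3 x w y z]
  rw [h5] at hb
  linarith

end IsKahlerCurvatureTensor

end QPKAux

section QPKMain

variable {V : Type*} [NormedAddCommGroup V] [InnerProductSpace ℝ V]
variable {J : V →ₗ[ℝ] V}

lemma skewJ (hJ2 : ∀ v : V, J (J v) = -v) (hJi : ∀ v w : V, ⟪J v, J w⟫ = ⟪v, w⟫)
    (u v : V) : ⟪J u, v⟫ = -⟪u, J v⟫ := by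
  have h := hJi u (J v)
  rw [hJ2 v, inner_neg_right] at h
  linarith

lemma skewJ' (hJ2 : ∀ v : V, J (J v) = -v) (hJi : ∀ v w : V, ⟪J v, J w⟫ = ⟪v, w⟫)
    (u v : V) : ⟪u, J v⟫ = -⟪v, J u⟫ := by
  rw [real_inner_comm (J v) u, skewJ hJ2 hJi]

lemma innerJself (hJ2 : ∀ v : V, J (J v) = -v) (hJi : ∀ v w : V, ⟪J v, J w⟫ = ⟪v, w⟫)
    (u : V) : ⟪u, J u⟫ = 0 := by
  have h := skewJ' hJ2 hJi u u
  linarith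

lemma normJ (hJi : ∀ v w : V, ⟪J v, J w⟫ = ⟪v, w⟫) (u : V) : ‖J u‖ = ‖u‖ := by
  have h := hJi u u
  rw [real_inner_self_eq_norm_mul_norm, real_inner_self_eq_norm_mul_norm] at h
  exact (mul_self_inj_of_nonneg (norm_nonneg _) (norm_nonneg _)).mp h

lemma R0_kahler (hJ2 : ∀ v : V, J (J v) = -v) (hJi : ∀ v w : V, ⟪J v, J w⟫ = ⟪v, w⟫) :
    IsKahlerCurvatureTensor J (R0 J) := by
  have sk := skewJ hJ2 hJi
  have sk' := skewJ' hJ2 hJi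
  refine ⟨⟨?_, ?_, ?_, ?_, ?_, ?_, ?_, ?_, ?_, ?_, ?_, ?_⟩, ?_, ?_⟩
  · intro x x' y z w
    simp only [R0, inner_add_left]; ring
  · intro c x y z w
    simp only [R0, real_inner_smul_left]; ring
  · intro x y y' z w
    simp only [R0, inner_add_left, map_add, inner_add_right]; ring
  · intro c x y z w
    simp only [R0, real_inner_smul_left, map_smul, real_inner_smul_right]; ring
  · intro x y z z' w
    simp only [R0, inner_add_right, map_add, inner_add_left]; ring
  · intro c x y z w
    simp only [R0, real_inner_smul_right, map_smul, real_inner_smul_left]; ring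
  · intro x y z w w'
    simp only [R0, inner_add_right, map_add]; ring
  · intro c x y z w
    simp only [R0, real_inner_smul_right, map_smul]; ring
  · intro x y z w
    simp only [R0]
    rw [sk' y x]; ring
  · intro x y z w
    simp only [R0]
    rw [sk' w z]; ring
  · intro x y z w
    simp only [R0]
    rw [real_inner_comm x z, real_inner_comm y w, real_inner_comm y z, real_inner_comm x w,
      sk' z x, sk' w y, sk' z y, sk' w x]
    ring
  · intro x y z w
    simp only [R0]
    rw [real_inner_comm z w, real_inner_comm y w, real_inner_comm y z,
      sk' w z, sk' w y, sk' z y]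
    ring
  · intro x y z w
    simp only [R0]
    rw [sk x z, sk y w, sk x w, sk y z, hJi x z, hJi y w, hJi x w, hJi y z, hJi x (J y)]
    ring
  · intro x y z w
    simp only [R0]
    rw [show ⟪x, J (J z)⟫ = -⟪x,z⟫ by rw [hJ2, inner_neg_right],
        show ⟪y, J (J w)⟫ = -⟪y,w⟫ by rw [hJ2, inner_neg_right],
        show ⟪x, J (J w)⟫ = -⟪x,w⟫ by rw [hJ2, inner_neg_right],
        show ⟪y, J (J z)⟫ = -⟪y,z⟫ by rw [hJ2, inner_neg_right],
        hJi z (J w)]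
    ring

lemma R0_hol (hJ2 : ∀ v : V, J (J v) = -v) (hJi : ∀ v w : V, ⟪J v, J w⟫ = ⟪v, w⟫)
    (u : V) : R0 J u (J u) u (J u) = -‖u‖ ^ 4 := by
  simp only [R0]
  rw [innerJself hJ2 hJi u, hJi u u,
    show ⟪u, J (J u)⟫ = -⟪u,u⟫ by rw [hJ2, inner_neg_right],
    show ⟪J u, J (J u)⟫ = -⟪J u, u⟫ by rw [hJ2, inner_neg_right],
    real_inner_comm u (J u), innerJself hJ2 hJi u,
    real_inner_self_eq_norm_mul_norm]
  ring

end QPKMain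

section QPKFinal

variable {V : Type*} [NormedAddCommGroup V] [InnerProductSpace ℝ V]

theorem statement12' [FiniteDimensional ℝ V] (n : ℕ) (hn : 2 ≤ n)
    (hdim : Module.finrank ℝ V = 2 * n)
    (J : V →ₗ[ℝ] V) (hJ2 : ∀ v, J (J v) = -v)
    (hJi : ∀ v w : V, ⟪J v, J w⟫ = ⟪v, w⟫)
    (R : V → V → V → V → ℝ) (hR : IsKahlerCurvatureTensor J R)
    (hpinch : ∀ x y : V, ‖x‖ = 1 → ‖y‖ = 1 → ⟪x, y⟫ = 0 →
      -1 ≤ R x y x y ∧ R x y x y ≤ -(1/4)) :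
    R = R0 J := by
  classical
  have hc := hR.toCurv
  -- scaled pinching (upper bound)
  have pinchU : ∀ u v : V, ⟪u, v⟫ = 0 → R u v u v ≤ -(1/4) * (‖u‖ ^ 2 * ‖v‖ ^ 2) := by
    intro u v huv
    by_cases hu : u = 0
    · subst hu; rw [hc.zero1]; simp
    by_cases hv : v = 0
    · subst hv; rw [hc.zero2]; simp
    have hup : (0:ℝ) < ‖u‖ := norm_pos_iff.mpr hu
    have hvp : (0:ℝ) < ‖v‖ := norm_pos_iff.mpr hv
    have h1 := hpinch (‖u‖⁻¹ • u) (‖v‖⁻¹ • v) (norm_smul_inv_norm hu) (norm_smul_inv_norm hv)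
      (by rw [real_inner_smul_left, real_inner_smul_right, huv]; ring)
    have h2 : R (‖u‖⁻¹ • u) (‖v‖⁻¹ • v) (‖u‖⁻¹ • u) (‖v‖⁻¹ • v)
        = ‖u‖⁻¹ * ‖u‖⁻¹ * ‖v‖⁻¹ * ‖v‖⁻¹ * R u v u v := by
      rw [hc.smul1, hc.smul2, hc.smul3, hc.smul4]; ring
    rw [h2] at h1
    have h3 := h1.2
    have key : R u v u v
        = (‖u‖ ^ 2 * ‖v‖ ^ 2) * (‖u‖⁻¹ * ‖u‖⁻¹ * ‖v‖⁻¹ * ‖v‖⁻¹ * R u v u v) := by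
      field_simp
    rw [key]
    calc (‖u‖ ^ 2 * ‖v‖ ^ 2) * (‖u‖⁻¹ * ‖u‖⁻¹ * ‖v‖⁻¹ * ‖v‖⁻¹ * R u v u v)
        ≤ (‖u‖ ^ 2 * ‖v‖ ^ 2) * (-(1/4)) := by
          apply mul_le_mul_of_nonneg_left h3 (by positivity)
      _ = -(1/4) * (‖u‖ ^ 2 * ‖v‖ ^ 2) := by ring
  -- Step (i): holomorphic sectional curvature is -1 on unit vectors
  have hunit : ∀ x : V, ‖x‖ = 1 → R x (J x) x (J x) = -1 := by
    intro x hx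
    -- find a unit vector y orthogonal to x and J x
    have hx0 : x ≠ 0 := by intro h; rw [h, norm_zero] at hx; norm_num at hx
    set K : Submodule ℝ V := Submodule.span ℝ ({x, J x} : Set V) with hK
    have hKle : Module.finrank ℝ K ≤ 2 := by
      refine (finrank_span_le_card _).trans ?_
      rw [Set.toFinset_insert, Set.toFinset_singleton]
      exact (Finset.card_insert_le _ _).trans (by simp)
    have horth := Submodule.finrank_add_finrank_orthogonal K
    have hKbot : Kᗮ ≠ ⊥ := by
      intro hbot
      rw [hbot, finrank_bot] at horth
      omega
    obtain ⟨y0, hy0K, hy0⟩ := Submodule.exists_mem_ne_zero_of_ne_bot hKbot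
    set y : V := ‖y0‖⁻¹ • y0 with hy
    have hyn : ‖y‖ = 1 := norm_smul_inv_norm hy0
    have hyK : y ∈ Kᗮ := Submodule.smul_mem _ _ hy0K
    have hxy : ⟪x, y⟫ = 0 := by
      have := (Submodule.mem_orthogonal K y).mp hyK x
        (Submodule.subset_span (Set.mem_insert _ _))
      exact this
    have hJxy : ⟪J x, y⟫ = 0 := by
      exact (Submodule.mem_orthogonal K y).mp hyK (J x)
        (Submodule.subset_span (Set.mem_insert_of_mem _ rfl))
    have hxJy : ⟪x, J y⟫ = 0 := by
      rw [skewJ' hJ2 hJi x y, real_inner_comm (J x) y]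
      rw [show ⟪J x, y⟫ = (0:ℝ) from hJxy]; ring
    have hJxn : ‖J x‖ = 1 := by rw [normJ hJi, hx]
    have hJyn : ‖J y‖ = 1 := by rw [normJ hJi, hyn]
    -- direct pinching bounds
    have h1 := hpinch x (J x) hx hJxn (innerJself hJ2 hJi x)
    have h2 := hpinch y (J y) hyn hJyn (innerJself hJ2 hJi y)
    have h3 := (hpinch x y hx hyn hxy).2
    have h4 := (hpinch x (J y) hx hJyn hxJy).2
    -- the totally real plane (x+y, Jx-Jy)
    have h5orth : ⟪x + y, J x - J y⟫ = 0 := by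
      rw [inner_add_left, inner_sub_right, inner_sub_right]
      rw [innerJself hJ2 hJi x, innerJself hJ2 hJi y, hxJy, real_inner_comm (J x) y,
        show ⟪J x, y⟫ = (0:ℝ) from hJxy]
      ring
    have hnxy : ‖x + y‖ ^ 2 = 2 := by
      rw [norm_add_sq_real, hx, hyn, hxy]; norm_num
    have hnJ : ‖J x - J y‖ ^ 2 = 2 := by
      rw [← map_sub, normJ hJi, norm_sub_sq_real, hx, hyn, hxy]; norm_num
    have h5 := pinchU (x + y) (J x - J y) h5orth
    rw [hnxy, hnJ] at h5
    rw [hR.I3 hJ2 x y] at h5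
    have h6 := hR.I4 hJ2 x y
    -- combine: H(x) + H(y) ≤ -2, H(x) ≥ -1, H(y) ≥ -1
    have e1 := h1.1
    have e2 := h2.1
    norm_num at h5
    linarith
  -- all-vector holomorphic curvature
  have hall : ∀ u : V, R u (J u) u (J u) = -‖u‖ ^ 4 := by
    intro u
    by_cases hu : u = 0
    · subst hu
      rw [map_zero, hc.zero1, norm_zero]; norm_num
    have hup : (0:ℝ) < ‖u‖ := norm_pos_iff.mpr hu
    have hxu : u = ‖u‖ • (‖u‖⁻¹ • u) := by
      rw [smul_smul, mul_inv_cancel₀ (ne_of_gt hup), one_smul]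
    calc R u (J u) u (J u)
        = R (‖u‖ • (‖u‖⁻¹ • u)) (J (‖u‖ • (‖u‖⁻¹ • u))) (‖u‖ • (‖u‖⁻¹ • u))
            (J (‖u‖ • (‖u‖⁻¹ • u))) := by rw [← hxu]
      _ = ‖u‖ * (‖u‖ * (‖u‖ * (‖u‖ *
            R (‖u‖⁻¹ • u) (J (‖u‖⁻¹ • u)) (‖u‖⁻¹ • u) (J (‖u‖⁻¹ • u))))) := by
          rw [map_smul, hc.smul1, hc.smul2, hc.smul3, hc.smul4]
      _ = -‖u‖ ^ 4 := by
          rw [hunit (‖u‖⁻¹ • u) (norm_smul_inv_norm hu)]; ring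
  -- Step (ii): the difference tensor vanishes
  have hR0 := R0_kahler hJ2 hJi
  have hD := hR.sub hR0
  have hDhol : ∀ u : V, (fun x y z w => R x y z w - R0 J x y z w) u (J u) u (J u) = 0 := by
    intro u
    show R u (J u) u (J u) - R0 J u (J u) u (J u) = 0
    rw [hall u, R0_hol hJ2 hJi u]; ring
  funext x y z w
  have h9 := hD.eq_zero_of_hol_zero hJ2 hDhol x y z w
  exact sub_eq_zero.mp h9

end QPKFinal

theorem statement12 [FiniteDimensional ℝ V] (n : ℕ) (hn : 2 ≤ n)
    (hdim : Module.finrank ℝ V = 2 * n)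
    (J : V →ₗ[ℝ] V) (hJ2 : ∀ v, J (J v) = -v)
    (hJi : ∀ v w : V, ⟪J v, J w⟫ = ⟪v, w⟫)
    (R : V → V → V → V → ℝ) (hR : IsKahlerCurvatureTensor J R)
    (hpinch : ∀ x y : V, ‖x‖ = 1 → ‖y‖ = 1 → ⟪x, y⟫ = 0 →
      -1 ≤ R x y x y ∧ R x y x y ≤ -(1/4)) :
    R = R0 J :=
  statement12' n hn hdim J hJ2 hJi R hR hpinch
end

section
/- A Kähler curvature tensor is determined by its holomorphic sectional curvatures: if R and R' are Kähler curvature tensors on (V,J,⟨,⟩) with R(u,J(u),u,J(u)) = R'(u,J(u),u,J(u)) for all u ∈ V, then R = R'. -/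
open RealInnerProductSpace

variable {V : Type*} [NormedAddCommGroup V] [InnerProductSpace ℝ V]

/-- A Kähler curvature tensor whose holomorphic sectional curvatures vanish is zero. -/
lemma kahler_zero_of_H_zero (J : V →ₗ[ℝ] V) (hJ2 : ∀ v, J (J v) = -v)
    (T : V → V → V → V → ℝ) (hT : IsKahlerCurvatureTensor J T)
    (hH : ∀ u : V, T u (J u) u (J u) = 0) :
    ∀ x y z w, T x y z w = 0 := by
  obtain ⟨hc, hJi1, hJi2⟩ := hT
  have neg1 : ∀ x y z w, T (-x) y z w = -T x y z w := by
    intro x y z w; rw [← neg_one_smul ℝ x, hc.smul1]; ring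
  have neg2 : ∀ x y z w, T x (-y) z w = -T x y z w := by
    intro x y z w; rw [← neg_one_smul ℝ y, hc.smul2]; ring
  have neg3 : ∀ x y z w, T x y (-z) w = -T x y z w := by
    intro x y z w; rw [← neg_one_smul ℝ z, hc.smul3]; ring
  have neg4 : ∀ x y z w, T x y z (-w) = -T x y z w := by
    intro x y z w; rw [← neg_one_smul ℝ w, hc.smul4]; ring
  have sub1 : ∀ x x' y z w, T (x - x') y z w = T x y z w - T x' y z w := by
    intro x x' y z w; rw [sub_eq_add_neg, hc.add1, neg1]; ring
  have sub2 : ∀ x y y' z w, T x (y - y') z w = T x y z w - T x y' z w := by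
    intro x y y' z w; rw [sub_eq_add_neg, hc.add2, neg2]; ring
  have sub3 : ∀ x y z z' w, T x y (z - z') w = T x y z w - T x y z' w := by
    intro x y z z' w; rw [sub_eq_add_neg, hc.add3, neg3]; ring
  have sub4 : ∀ x y z w w', T x y z (w - w') = T x y z w - T x y z w' := by
    intro x y z w w'; rw [sub_eq_add_neg, hc.add4, neg4]; ring
  -- normalizations of the mixed terms
  have eB : ∀ u v : V, T v (J u) v (J u) = T u (J v) v (J u) := by
    intro u v
    have h1 : T v (J u) (J v) (J (J u)) = T v (J u) v (J u) := hJi2 _ _ _ _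
    rw [hJ2 u, neg4] at h1
    rw [← h1, hc.antisym2 v (J u) (J v) u, neg_neg]
    exact hc.pairsym u (J v) v (J u)
  have eB' : ∀ u v : V, T u (J v) u (J v) = T u (J v) v (J u) := by
    intro u v
    have h1 : T u (J v) (J u) (J (J v)) = T u (J v) u (J v) := hJi2 _ _ _ _
    rw [hJ2 v, neg4] at h1
    rw [← h1, hc.antisym2 u (J v) (J u) v, neg_neg]
  have eC : ∀ u v : V, T v (J u) u (J v) = T u (J v) v (J u) :=
    fun u v => hc.pairsym u (J v) v (J u)
  have eQ : ∀ u v : V, T v (J v) u (J u) = T u (J u) v (J v) :=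
    fun u v => hc.pairsym u (J u) v (J v)
  -- key identity: Q(u,v) + 2 S(u,v) = 0
  have key1 : ∀ u v : V, T u (J u) v (J v) + 2 * T u (J v) v (J u) = 0 := by
    intro u v
    have h1 := hH (u + v)
    have h2 := hH (u - v)
    simp only [map_add, map_sub, hc.add1, hc.add2, hc.add3, hc.add4,
      sub1, sub2, sub3, sub4] at h1 h2
    rw [eB u v, eB' u v, eC u v, eQ u v] at h1 h2
    linarith [hH u, hH v, h1, h2]
  -- Q(u,v) + 2 K(u,v) = 0
  have key2 : ∀ u v : V, T u (J u) v (J v) + 2 * T u v u v = 0 := by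
    intro u v
    have h1 := key1 u (J v)
    -- Q(u,Jv) = Q(u,v)
    have hq : T u (J u) (J v) (J (J v)) = T u (J u) v (J v) := by
      rw [hJ2 v, neg4, ← hc.antisym2]
    -- S(u,Jv) = K(u,v)
    have hs : T u (J (J v)) (J v) (J u) = T u v u v := by
      rw [hJ2 v, neg2]
      have h3 : T u v (J v) (J u) = T u v v u := hJi2 _ _ _ _
      rw [h3, hc.antisym2 u v v u, neg_neg]
    rw [hq, hs] at h1
    exact h1
  -- Q(u,v) = K(u,v) + K(u,Jv)
  have keyQ : ∀ u v : V, T u (J u) v (J v) = T u v u v + T u (J v) u (J v) := by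
    intro u v
    have hb := hc.bianchi u (J u) v (J v)
    have hm : T u (J v) (J (J u)) (J v) = T u (J v) (J u) v := hJi2 u (J v) (J u) v
    rw [hJ2 u, neg3] at hm
    have hl : T u v (J v) (J u) = T u v v u := hJi2 _ _ _ _
    rw [← hm, hl, hc.antisym2 u v v u] at hb
    linarith
  -- K ≡ 0
  have Kzero : ∀ u v : V, T u v u v = 0 := by
    intro u v
    have h1 := key2 u v
    have h2 := key2 u (J v)
    have hq : T u (J u) (J v) (J (J v)) = T u (J u) v (J v) := by
      rw [hJ2 v, neg4, ← hc.antisym2]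
    rw [hq] at h2
    have h3 := keyQ u v
    have h4 : T u (J v) u (J v) = T u (J u) v (J v) - T u v u v := by linarith
    linarith
  -- K ≡ 0 implies T ≡ 0 (classical argument)
  have P1 : ∀ x y z : V, T x y z y = 0 := by
    intro x y z
    have h1 := Kzero (x + z) y
    simp only [hc.add1, hc.add3] at h1
    have h2 : T z y x y = T x y z y := hc.pairsym x y z y
    have := Kzero x y
    have := Kzero z y
    linarith
  have P2 : ∀ x y z w : V, T x y z w = -T x w z y := by
    intro x y z w
    have h1 := P1 x (y + w) z
    simp only [hc.add2, hc.add4] at h1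
    have := P1 x y z
    have := P1 x w z
    linarith
  intro x y z w
  have hb := hc.bianchi x y z w
  have e1 : T x z w y = T x y z w := (P2 x z w y).trans (hc.antisym2 x y z w).symm
  have e2 : T x w y z = T x y z w :=
    (P2 x w y z).trans ((hc.antisym2 x z w y).symm.trans e1)
  linarith

theorem statement15 (J : V →ₗ[ℝ] V) (hJ2 : ∀ v, J (J v) = -v)
    (hJi : ∀ v w : V, ⟪J v, J w⟫ = ⟪v, w⟫)
    (R R' : V → V → V → V → ℝ)
    (hR : IsKahlerCurvatureTensor J R) (hR' : IsKahlerCurvatureTensor J R')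
    (h : ∀ u : V, R u (J u) u (J u) = R' u (J u) u (J u)) :
    R = R' := by
  obtain ⟨⟨a1, s1, a2, s2, a3, s3, a4, s4, an1, an2, ps, bi⟩, j1, j2⟩ := hR
  obtain ⟨⟨a1', s1', a2', s2', a3', s3', a4', s4', an1', an2', ps', bi'⟩, j1', j2'⟩ := hR'
  set T : V → V → V → V → ℝ := fun x y z w => R x y z w - R' x y z w with hTdef
  have hTK : IsKahlerCurvatureTensor J T := by
    refine ⟨⟨?_, ?_, ?_, ?_, ?_, ?_, ?_, ?_, ?_, ?_, ?_, ?_⟩, ?_, ?_⟩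
    · intro x x' y z w; show R (x + x') y z w - _ = _; rw [a1, a1']; ring
    · intro c x y z w; show R (c • x) y z w - _ = _; rw [s1, s1']; ring
    · intro x y y' z w; show R x (y + y') z w - _ = _; rw [a2, a2']; ring
    · intro c x y z w; show R x (c • y) z w - _ = _; rw [s2, s2']; ring
    · intro x y z z' w; show R x y (z + z') w - _ = _; rw [a3, a3']; ring
    · intro c x y z w; show R x y (c • z) w - _ = _; rw [s3, s3']; ring
    · intro x y z w w'; show R x y z (w + w') - _ = _; rw [a4, a4']; ring
    · intro c x y z w; show R x y z (c • w) - _ = _; rw [s4, s4']; ring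
    · intro x y z w; show R x y z w - _ = _; rw [an1 x y z w, an1' x y z w]; ring
    · intro x y z w; show R x y z w - _ = _; rw [an2 x y z w, an2' x y z w]; ring
    · intro x y z w; show R z w x y - _ = _; rw [ps x y z w, ps' x y z w]
    · intro x y z w
      show R x y z w - R' x y z w + (R x w y z - R' x w y z) + (R x z w y - R' x z w y) = 0
      linarith [bi x y z w, bi' x y z w]
    · intro x y z w; show R (J x) (J y) z w - _ = _; rw [j1, j1']
    · intro x y z w; show R x y (J z) (J w) - _ = _; rw [j2, j2']
  have hH : ∀ u : V, T u (J u) u (J u) = 0 := by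
    intro u; show R u (J u) u (J u) - R' u (J u) u (J u) = 0; rw [h u]; ring
  have hz := kahler_zero_of_H_zero J hJ2 T hTK hH
  funext x y z w
  have := hz x y z w
  simp only [hTdef] at this
  linarith
end

section
/- Negatively curved Kähler pinching bound: If R is a Kähler curvature tensor on a real inner product space of dimension 2n ≥ 4 whose sectional curvatures satisfy -α ≤ K ≤ -β < 0 for all orthonormal pairs, then β/α ≤ 1/4; i.e., no negatively curved Kähler curvature tensor has pinching strictly better than 1/4. -/
open RealInnerProductSpace

variable {V : Type*} [NormedAddCommGroup V] [InnerProductSpace ℝ V]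

lemma expandQ {R : V → V → V → V → ℝ} (hC : IsCurvatureTensor R) (s t : ℝ) (a b c d : V) :
    R (a + s•b) (c + t•d) (a + s•b) (c + t•d) =
      R a c a c + t * R a c a d + s * R a c b c + (s*t) * R a c b d
    + t * R a d a c + (t*t) * R a d a d + (s*t) * R a d b c + (s*t*t) * R a d b d
    + s * R b c a c + (s*t) * R b c a d + (s*s) * R b c b c + (s*s*t) * R b c b d
    + (s*t) * R b d a c + (s*t*t) * R b d a d + (s*s*t) * R b d b c + (s*s*t*t) * R b d b d := by
  simp only [hC.add1, hC.add2, hC.add3, hC.add4, hC.smul1, hC.smul2, hC.smul3, hC.smul4]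
  ring

lemma berger {R : V → V → V → V → ℝ} (hC : IsCurvatureTensor R) (x y z w : V) :
    R (x+z) (y+w) (x+z) (y+w) - R (x+z) (y-w) (x+z) (y-w)
  - R (x-z) (y+w) (x-z) (y+w) + R (x-z) (y-w) (x-z) (y-w)
  - (R (x+w) (y+z) (x+w) (y+z) - R (x+w) (y-z) (x+w) (y-z)
  - R (x-w) (y+z) (x-w) (y+z) + R (x-w) (y-z) (x-w) (y-z))
  = 24 * R x y z w := by
  have h1 := expandQ hC 1 1 x z y w
  have h2 := expandQ hC 1 (-1) x z y w
  have h3 := expandQ hC (-1) 1 x z y w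
  have h4 := expandQ hC (-1) (-1) x z y w
  have h5 := expandQ hC 1 1 x w y z
  have h6 := expandQ hC 1 (-1) x w y z
  have h7 := expandQ hC (-1) 1 x w y z
  have h8 := expandQ hC (-1) (-1) x w y z
  simp only [one_smul, neg_one_smul, ← sub_eq_add_neg] at h1 h2 h3 h4 h5 h6 h7 h8
  have p1 := hC.pairsym x y z w
  have p2 := hC.pairsym x w z y
  have p3 := hC.pairsym x y w z
  have p4 := hC.pairsym x z w y
  have a1 := hC.antisym2 x w z y
  have a2 := hC.antisym2 x y w z
  have b := hC.bianchi x y z w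
  rw [h1, h2, h3, h4, h5, h6, h7, h8]
  linarith

theorem statement18 [FiniteDimensional ℝ V] (n : ℕ) (hn : 2 ≤ n)
    (hdim : Module.finrank ℝ V = 2 * n)
    (J : V →ₗ[ℝ] V) (hJ2 : ∀ v, J (J v) = -v)
    (hJi : ∀ v w : V, ⟪J v, J w⟫ = ⟪v, w⟫)
    (R : V → V → V → V → ℝ) (hR : IsKahlerCurvatureTensor J R)
    (α β : ℝ) (hβ : 0 < β) (hαβ : β ≤ α)
    (hpinch : ∀ x y : V, ‖x‖ = 1 → ‖y‖ = 1 → ⟪x, y⟫ = 0 →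
      -α ≤ R x y x y ∧ R x y x y ≤ -β) :
    β / α ≤ 1/4 := by
  obtain ⟨C, J1, J2⟩ := hR
  have hα : 0 < α := lt_of_lt_of_le hβ hαβ
  -- find a unit vector u
  have hpos : 0 < Module.finrank ℝ V := by omega
  have : Nontrivial V := Module.nontrivial_of_finrank_pos hpos
  obtain ⟨u₀, hu₀⟩ := exists_ne (0 : V)
  set u : V := ‖u₀‖⁻¹ • u₀ with hudef
  have hu : ‖u‖ = 1 := norm_smul_inv_norm hu₀
  -- find unit v orthogonal to u and J u
  set K : Submodule ℝ V := Submodule.span ℝ ({u, J u} : Set V) with hK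
  have hKle : Module.finrank ℝ K ≤ 2 := by
    classical
    refine (finrank_span_le_card _).trans ?_
    rw [Set.toFinset_insert, Set.toFinset_singleton]
    exact (Finset.card_insert_le _ _).trans (by simp)
  have horth := K.finrank_add_finrank_orthogonal
  have hKbot : Kᗮ ≠ ⊥ := by
    intro h
    rw [h, finrank_bot] at horth
    omega
  obtain ⟨v₀, hv₀K, hv₀⟩ := Submodule.exists_mem_ne_zero_of_ne_bot hKbot
  set v : V := ‖v₀‖⁻¹ • v₀ with hvdef
  have hv : ‖v‖ = 1 := norm_smul_inv_norm hv₀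
  have hvK : v ∈ Kᗮ := Submodule.smul_mem _ _ hv₀K
  have hxz : ⟪u, v⟫ = 0 :=
    (Submodule.mem_orthogonal K v).1 hvK u (Submodule.subset_span (Set.mem_insert _ _))
  have hyz : ⟪J u, v⟫ = 0 :=
    (Submodule.mem_orthogonal K v).1 hvK (J u)
      (Submodule.subset_span (Set.mem_insert_of_mem _ rfl))
  -- orthonormal frame facts
  have hnormJ : ∀ a : V, ‖J a‖ = ‖a‖ := by
    intro a
    have h1 : ⟪J a, J a⟫ = ⟪a, a⟫ := hJi a a
    rw [real_inner_self_eq_norm_sq, real_inner_self_eq_norm_sq] at h1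
    nlinarith [norm_nonneg (J a), norm_nonneg a]
  have hy : ‖J u‖ = 1 := by rw [hnormJ, hu]
  have hw : ‖J v‖ = 1 := by rw [hnormJ, hv]
  have hselfJ : ∀ a : V, ⟪a, J a⟫ = 0 := by
    intro a
    have h1 : ⟪J a, J (J a)⟫ = ⟪a, J a⟫ := hJi a (J a)
    rw [hJ2, inner_neg_right, real_inner_comm] at h1
    linarith
  have hxy : ⟪u, J u⟫ = 0 := hselfJ u
  have hzw : ⟪v, J v⟫ = 0 := hselfJ v
  have hxw : ⟪u, J v⟫ = 0 := by
    have h1 : ⟪J u, J (J v)⟫ = ⟪u, J v⟫ := hJi u (J v)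
    rw [hJ2, inner_neg_right, hyz] at h1
    linarith
  have hyw : ⟪J u, J v⟫ = 0 := by rw [hJi, hxz]
  -- bound for R a b a b when ‖a‖² = ‖b‖² = 2 and a ⊥ b
  have hQ : ∀ a b : V, ‖a‖^2 = 2 → ‖b‖^2 = 2 → ⟪a, b⟫ = 0 →
      -(4*α) ≤ R a b a b ∧ R a b a b ≤ -(4*β) := by
    intro a b ha hb hab
    have hs2 : (0:ℝ) < Real.sqrt 2 := Real.sqrt_pos.2 (by norm_num)
    set c : ℝ := (Real.sqrt 2)⁻¹ with hc
    have hc0 : 0 ≤ c := by positivity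
    have hnorm : ∀ e : V, ‖e‖^2 = 2 → ‖c • e‖ = 1 := by
      intro e he
      have h2 : ‖e‖ = Real.sqrt 2 := by
        rw [← Real.sqrt_sq (norm_nonneg e), he]
      rw [norm_smul, Real.norm_eq_abs, abs_of_nonneg hc0, h2, hc,
        inv_mul_cancel₀ (ne_of_gt hs2)]
    have hip : ⟪c • a, c • b⟫ = 0 := by
      rw [real_inner_smul_left, real_inner_smul_right, hab]; ring
    obtain ⟨hl, hr⟩ := hpinch _ _ (hnorm a ha) (hnorm b hb) hip
    have hscale : R (c•a) (c•b) (c•a) (c•b) = (c*c*c*c) * R a b a b := by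
      rw [C.smul1, C.smul2, C.smul3, C.smul4]; ring
    have hc4 : c*c*c*c = 1/4 := by
      have h4 : Real.sqrt 2 * Real.sqrt 2 = 2 := Real.mul_self_sqrt (by norm_num)
      have : c*c*c*c = (Real.sqrt 2 * Real.sqrt 2 * (Real.sqrt 2 * Real.sqrt 2))⁻¹ := by
        rw [hc]; ring
      rw [this, h4]; norm_num
    rw [hscale, hc4] at hl hr
    constructor <;> linarith
  -- norms of sums/differences
  have hnsq : ∀ a b : V, ‖a‖ = 1 → ‖b‖ = 1 → ⟪a, b⟫ = 0 →
      ‖a+b‖^2 = 2 ∧ ‖a-b‖^2 = 2 := by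
    intro a b ha hb hab
    constructor
    · rw [norm_add_sq_real, ha, hb, hab]; norm_num
    · rw [norm_sub_sq_real, ha, hb, hab]; norm_num
  have hio : ∀ a b c d : V, ⟪a,c⟫ = 0 → ⟪a,d⟫ = 0 → ⟪b,c⟫ = 0 → ⟪b,d⟫ = 0 →
      ⟪a+b, c+d⟫ = 0 ∧ ⟪a+b, c-d⟫ = 0 ∧ ⟪a-b, c+d⟫ = 0 ∧ ⟪a-b, c-d⟫ = 0 := by
    intro a b c d h1 h2 h3 h4
    refine ⟨?_, ?_, ?_, ?_⟩ <;>
      simp [inner_add_left, inner_add_right, inner_sub_left, inner_sub_right, h1, h2, h3, h4]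
  have hzy : ⟪v, J u⟫ = 0 := by rw [real_inner_comm]; exact hyz
  have hwy : ⟪J v, J u⟫ = 0 := by rw [real_inner_comm]; exact hyw
  have hwz : ⟪J v, v⟫ = 0 := by rw [real_inner_comm]; exact hzw
  have hzx : ⟪v, u⟫ = 0 := by rw [real_inner_comm]; exact hxz
  -- the eight sectional curvature bounds
  obtain ⟨hn1, hn2⟩ := hnsq u v hu hv hxz
  obtain ⟨hn3, hn4⟩ := hnsq (J u) (J v) hy hw hyw
  obtain ⟨hn5, hn6⟩ := hnsq u (J v) hu hw hxw
  obtain ⟨hn7, hn8⟩ := hnsq (J u) v hy hv hyz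
  obtain ⟨hi1, hi2, hi3, hi4⟩ := hio u v (J u) (J v) hxy hxw hzy hzw
  obtain ⟨hi5, hi6, hi7, hi8⟩ := hio u (J v) (J u) v hxy hxz hwy hwz
  have q1 := hQ (u+v) (J u + J v) hn1 hn3 hi1
  have q2 := hQ (u+v) (J u - J v) hn1 hn4 hi2
  have q3 := hQ (u-v) (J u + J v) hn2 hn3 hi3
  have q4 := hQ (u-v) (J u - J v) hn2 hn4 hi4
  have q5 := hQ (u+J v) (J u + v) hn5 hn7 hi5
  have q6 := hQ (u+J v) (J u - v) hn5 hn8 hi6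
  have q7 := hQ (u-J v) (J u + v) hn6 hn7 hi7
  have q8 := hQ (u-J v) (J u - v) hn6 hn8 hi8
  have hid := berger C u (J u) v (J v)
  -- Kähler identity : R u (J u) v (J v) = K(u,v) + K(Ju,v)
  have neg2 : ∀ a b c d : V, R a (-b) c d = -R a b c d := by
    intro a b c d
    rw [← neg_one_smul ℝ b, C.smul2]; ring
  have e1 : R u (J v) (J u) v = - R (J u) v (J u) v := by
    have h := J1 u (J v) (J u) v
    rw [hJ2, neg2] at h
    linarith
  have e2 : R u v (J v) (J u) = - R u v u v := by
    have hp := C.pairsym (J v) (J u) u v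
    have hj := J1 v u u v
    have ha := C.antisym1 v u u v
    rw [hp, hj, ha]
  have hb := C.bianchi u (J u) v (J v)
  have hKuv := (hpinch u v hu hv hxz).2
  have hKJuv := (hpinch (J u) v hy hv hyz).2
  -- conclude
  rw [div_le_iff₀ hα]
  have hA : R u (J u) v (J v) ≤ -(2*β) := by
    rw [e1, e2] at hb; linarith
  linarith [q1.1, q1.2, q2.1, q2.2, q3.1, q3.2, q4.1, q4.2, q5.1, q5.2, q6.1, q6.2,
    q7.1, q7.2, q8.1, q8.2, hid, hA]
end
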